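/- Speculation is strictly more profitable in second-price auctions than in first-price auctions: the functions Π* and Π⋆ are continuous on [0,r], both attain their maxima there, and max_{v ∈ [0,r]} Π*(v) > max_{v ∈ [0,r]} Π⋆(v). -/

import Mathlib

open MeasureTheory Set

/-- Second-price acquisition price: `p*(v) = v + ∫_v^r (1−F x)^(N−1) dx`. -/
noncomputable def pstar (F : ℝ → ℝ) (N : ℕ) (r : ℝ) (v : ℝ) : ℝ :=
  v + ∫ x in v..r, (1 - F x) ^ (N - 1)

/-- Speculator's expected payment from a second-price subgame against `m` sellers. -/
noncomputable def y (F : ℝ → ℝ) (r : ℝ) (m : ℕ) (v : ℝ) : ℝ :=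
  v + ∫ x in v..r, ((1 - F x) / (1 - F v)) ^ m

/-- Speculator's expected profit in the second-price speculation game at cutoff `v`. -/
noncomputable def PiSPA (F : ℝ → ℝ) (N : ℕ) (r : ℝ) (v : ℝ) : ℝ :=
  (∑ m ∈ Finset.range N,
      (N.choose m : ℝ) * (F v) ^ (N - m) * (1 - F v) ^ m * y F r m v)
    - N * F v * pstar F N r v

/-- Truncated conditional CDF `G(x; v) = (F x − F v)/(1 − F v)`. -/
noncomputable def G (F : ℝ → ℝ) (v x : ℝ) : ℝ := (F x - F v) / (1 - F v)

/-- `ubar_b(m, v) = max_{b ∈ [v, r]} b (1 − G(b; v))^m`. -/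
noncomputable def ubarb (F : ℝ → ℝ) (r : ℝ) (m : ℕ) (v : ℝ) : ℝ :=
  sSup ((fun b => b * (1 - G F v b) ^ m) '' Icc v r)

/-- First-price acquisition price `p⋆(v)`. -/
noncomputable def pFPA (F : ℝ → ℝ) (N : ℕ) (r : ℝ) (v : ℝ) : ℝ :=
  v + (∫ x in v..r, (1 - F x) ^ (N - 1)) +
    ∑ m ∈ Finset.range (N - 1),
      ((N - 1).choose m : ℝ) * (1 - F v) ^ m * (F v) ^ (N - 1 - m) *
        (ubarb F r (m + 1) v - v)

/-- Speculator's expected profit in the first-price speculation game at cutoff `v`. -/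
noncomputable def PiFPA (F : ℝ → ℝ) (N : ℕ) (r : ℝ) (v : ℝ) : ℝ :=
  (∑ m ∈ Finset.Icc 1 (N - 1),
      (N.choose m : ℝ) * (1 - F v) ^ m * (F v) ^ (N - m) * ubarb F r m v)
    + (F v) ^ N * r - N * F v * pFPA F N r v

/-!
Multiplying through by `(1 - F v) ^ m` turns `y m v` into
`(1 - F v) ^ m * v + ∫ x in v..r, (1 - F x) ^ m` and `ubar_b m v` into
`max_{b ∈ [v, r]} b * (1 - F b) ^ m`, so both profits are continuous: tail integrals and maxima
over `[v, r]` of a fixed continuous function depend continuously on `v`.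

`Π* - Π⋆` is a nonnegative combination of `y m v - ubar_b m v` and `ubar_b (m + 1) v - v`. The
first is positive for `0 < v < r`: a bid `b` earns `v * (1 - F b) ^ m` plus a rectangle under the
graph of `(1 - F ·) ^ m` on `[v, b]`. So `Π⋆ < Π*` on `(0, r)`, while `Π⋆ 0 = 0` and
`Π⋆ r = Π* r < 0` by Bernoulli. Finally `Π*` is positive somewhere: near `0` its loss is
`O(F v ^ 2 * v)`, while the `m = N - 2` term of its gain is of order `F v ^ 2`.
-/

open Filter

lemma one_sub_pow_le {a : ℝ} (ha : 0 ≤ a) (ha1 : a ≤ 1) (n : ℕ) :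
    (1 - a) ^ n ≤ 1 - n * a + n.choose 2 * a ^ 2 := by
  induction n with
  | zero => simp
  | succ n ih =>
    have hchoose : ((n + 1).choose 2 : ℝ) = n.choose 2 + n := by
      rw [Nat.choose_succ_succ, Nat.choose_one_right]; push_cast; ring
    have h := mul_le_mul_of_nonneg_left ih (sub_nonneg.2 ha1)
    rw [pow_succ, hchoose]
    push_cast
    nlinarith [mul_nonneg (Nat.cast_nonneg (n.choose 2) : (0:ℝ) ≤ _) (pow_nonneg ha 3)]

lemma one_sub_mul_lt_one_sub_pow {a : ℝ} (ha : 0 < a) (ha1 : a ≤ 1) {n : ℕ} (hn : 2 ≤ n) :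
    1 - n * a < (1 - a) ^ n := by
  have h := one_add_mul_self_lt_rpow_one_add (s := -a) (by linarith) (by linarith)
    (p := n) (by exact_mod_cast hn)
  rw [Real.rpow_natCast, ← sub_eq_add_neg, mul_neg, ← sub_eq_add_neg] at h
  exact h

lemma sum_range_choose_mul_pow_of_add_eq_one {a b : ℝ} (hab : a + b = 1) (n : ℕ) :
    ∑ m ∈ Finset.range n, (n.choose m : ℝ) * a ^ (n - m) * b ^ m = 1 - b ^ n := by
  have h := add_pow b a n
  rw [add_comm, hab, one_pow, Finset.sum_range_succ, Nat.choose_self, Nat.sub_self] at h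
  rw [eq_sub_iff_add_eq, h]
  simp only [pow_zero, mul_one, Nat.cast_one]
  congr 1
  exact Finset.sum_congr rfl fun m _ => by ring

lemma Finset.sum_range_eq_add_sum_Icc {M : Type*} [AddCommMonoid M] {n : ℕ} (hn : 1 ≤ n)
    (g : ℕ → M) : ∑ m ∈ range n, g m = g 0 + ∑ m ∈ Icc 1 (n - 1), g m := by
  obtain ⟨k, rfl⟩ : ∃ k, n = k + 1 := ⟨n - 1, by omega⟩
  rw [range_eq_Ico, sum_eq_sum_Ico_succ_bot k.succ_pos, Nat.succ_eq_add_one, zero_add,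
    Ico_add_one_right_eq_Icc, Nat.add_sub_cancel]

lemma ContinuousOn.sSup_image_Icc {ψ : ℝ → ℝ} {a b : ℝ} (hab : a ≤ b)
    (hψ : ContinuousOn ψ (Icc a b)) :
    ContinuousOn (fun v => sSup (ψ '' Icc v b)) (Icc a b) := by
  set ψ' : ℝ → ℝ := fun x => ψ (projIcc a b hab x)
  have hψ' : Continuous ψ' :=
    hψ.comp_continuous (continuous_subtype_val.comp continuous_projIcc) fun x =>
      (projIcc a b hab x).2
  have hΦ : Continuous fun p : ℝ × ℝ => ψ' (p.1 + p.2 * (b - p.1)) := by fun_prop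
  refine ((isCompact_Icc (a := (0:ℝ)) (b := 1)).continuous_sSup
    (f := fun v t => ψ' (v + t * (b - v))) hΦ).continuousOn.congr ?_
  intro v hv
  have hsub : Icc v b ⊆ Icc a b := Icc_subset_Icc_left hv.1
  have himg : (fun t => v + t * (b - v)) '' Icc 0 1 = Icc v b := by
    have := image_mul_right_Icc (zero_le_one (α := ℝ)) (sub_nonneg.2 hv.2)
    rw [← image_image (fun x => v + x) (· * (b - v)), this, image_const_add_Icc]
    simp
  dsimp only
  rw [← image_image ψ' (fun t => v + t * (b - v)), himg]
  exact congrArg sSup (image_congr fun x hx => by simp [ψ', projIcc_of_mem hab (hsub hx)])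

lemma ContinuousOn.exists_mem_Ioo_pos {g : ℝ → ℝ} {a b : ℝ} (hab : a < b)
    (hg : ContinuousOn g (Icc a b)) (ha : 0 < g a) : ∃ v ∈ Ioo a b, 0 < g v := by
  have hga : ContinuousWithinAt g (Ioo a b) a :=
    (hg a (left_mem_Icc.2 hab.le)).mono Ioo_subset_Icc_self
  have := left_nhdsWithin_Ioo_neBot hab
  exact ((hga.eventually (lt_mem_nhds ha)).and self_mem_nhdsWithin).exists.imp
    fun v hv => ⟨hv.2, hv.1⟩

structure IsStrictCDF (F : ℝ → ℝ) : Prop where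
  continuousOn : ContinuousOn F (Icc 0 1)
  strictMonoOn : StrictMonoOn F (Icc 0 1)
  map_zero : F 0 = 0
  map_one : F 1 = 1

namespace IsStrictCDF

variable {F f : ℝ → ℝ} {x a b r : ℝ} {m : ℕ}

lemma of_hasDerivAt (hderiv : ∀ x ∈ Icc (0 : ℝ) 1, HasDerivAt F (f x) x)
    (hfpos : ∀ x ∈ Ioo (0 : ℝ) 1, 0 < f x) (hF0 : F 0 = 0) (hF1 : F 1 = 1) :
    IsStrictCDF F := by
  have hcont : ContinuousOn F (Icc 0 1) := fun x hx =>
    (hderiv x hx).continuousAt.continuousWithinAt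
  refine ⟨hcont, strictMonoOn_of_deriv_pos (convex_Icc 0 1) hcont fun x hx => ?_, hF0, hF1⟩
  rw [interior_Icc] at hx
  rw [(hderiv x (Ioo_subset_Icc_self hx)).deriv]
  exact hfpos x hx

variable (hF : IsStrictCDF F)
include hF

lemma le_one (hx : x ∈ Icc 0 1) : F x ≤ 1 :=
  hF.map_one ▸ hF.strictMonoOn.monotoneOn hx (right_mem_Icc.2 zero_le_one) hx.2

lemma pos (hx0 : 0 < x) (hx1 : x ≤ 1) : 0 < F x :=
  hF.map_zero ▸ hF.strictMonoOn (left_mem_Icc.2 zero_le_one) ⟨hx0.le, hx1⟩ hx0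

lemma lt_one (hx0 : 0 ≤ x) (hx1 : x < 1) : F x < 1 :=
  hF.map_one ▸ hF.strictMonoOn ⟨hx0, hx1.le⟩ (right_mem_Icc.2 zero_le_one) hx1

lemma continuousOn_one_sub_pow {s : Set ℝ} (hs : s ⊆ Icc 0 1) :
    ContinuousOn (fun x => (1 - F x) ^ m) s :=
  (continuousOn_const.sub (hF.continuousOn.mono hs)).pow m

lemma intervalIntegrable_one_sub_pow (ha : a ∈ Icc (0 : ℝ) 1) (hb : b ∈ Icc (0 : ℝ) 1) :
    IntervalIntegrable (fun x => (1 - F x) ^ m) volume a b :=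
  (hF.continuousOn_one_sub_pow (uIcc_subset_Icc ha hb)).intervalIntegrable

lemma continuousOn_integral_one_sub_pow (hr0 : 0 ≤ r) (hr1 : r ≤ 1) :
    ContinuousOn (fun v => ∫ x in v..r, (1 - F x) ^ m) (Icc 0 r) := by
  have h : IntegrableOn (fun x => (1 - F x) ^ m) (uIcc 0 r) volume :=
    (hF.continuousOn_one_sub_pow (uIcc_subset_Icc (left_mem_Icc.2 zero_le_one) ⟨hr0, hr1⟩)
      ).integrableOn_compact isCompact_uIcc
  simpa only [uIcc_of_le hr0] using intervalIntegral.continuousOn_primitive_interval_left h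

lemma integral_one_sub_pow_nonneg (ha : 0 ≤ a) (hab : a ≤ b) (hb : b ≤ 1) :
    0 ≤ ∫ x in a..b, (1 - F x) ^ m :=
  intervalIntegral.integral_nonneg hab fun _ hx =>
    pow_nonneg (sub_nonneg.2 (hF.le_one ⟨ha.trans hx.1, hx.2.trans hb⟩)) m

lemma integral_one_sub_pow_pos (ha : 0 ≤ a) (hab : a < b) (hb : b ≤ 1) :
    0 < ∫ x in a..b, (1 - F x) ^ m :=
  intervalIntegral.intervalIntegral_pos_of_pos_on
    (hF.intervalIntegrable_one_sub_pow ⟨ha, hab.le.trans hb⟩ ⟨ha.trans hab.le, hb⟩)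
    (fun _ hx => pow_pos (sub_pos.2 (hF.lt_one (ha.trans hx.1.le) (hx.2.trans_le hb))) m) hab

end IsStrictCDF

section SecondPrice

variable {F : ℝ → ℝ} {N m : ℕ} {r v : ℝ}

lemma IsStrictCDF.mul_y_eq (hF : IsStrictCDF F) (hr1 : r ≤ 1) (hv : v ∈ Icc 0 r) :
    (1 - F v) ^ m * y F r m v = (1 - F v) ^ m * v + ∫ x in v..r, (1 - F x) ^ m := by
  rcases hv.2.eq_or_lt with rfl | hvr
  · simp [y]
  have hFv : (1 - F v) ^ m ≠ 0 :=
    pow_ne_zero _ (sub_pos.2 (hF.lt_one hv.1 (hvr.trans_le hr1))).ne'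
  rw [y, mul_add, ← intervalIntegral.integral_const_mul]
  congr 1
  exact intervalIntegral.integral_congr fun x _ => by rw [div_pow, mul_div_cancel₀ _ hFv]

lemma IsStrictCDF.PiSPA_eq (hF : IsStrictCDF F) (hN : 1 ≤ N) (hr1 : r ≤ 1)
    (hv : v ∈ Icc 0 r) :
    PiSPA F N r v = v * (1 - (1 - F v) ^ N - N * F v) +
      ∑ m ∈ Finset.range (N - 1),
        (N.choose m : ℝ) * F v ^ (N - m) * ∫ x in v..r, (1 - F x) ^ m := by
  have hterm : ∀ m, (N.choose m : ℝ) * F v ^ (N - m) * (1 - F v) ^ m * y F r m v =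
      (N.choose m : ℝ) * F v ^ (N - m) * (1 - F v) ^ m * v +
        (N.choose m : ℝ) * F v ^ (N - m) * ∫ x in v..r, (1 - F x) ^ m := fun m => by
    rw [mul_assoc, hF.mul_y_eq hr1 hv]; ring
  obtain ⟨k, rfl⟩ : ∃ k, N = k + 1 := ⟨N - 1, by omega⟩
  rw [PiSPA, pstar, Finset.sum_congr rfl fun m _ => hterm m, Finset.sum_add_distrib,
    ← Finset.sum_mul, sum_range_choose_mul_pow_of_add_eq_one (by ring),
    Finset.sum_range_succ _ k, Nat.add_sub_cancel, Nat.add_sub_cancel_left,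
    Nat.choose_succ_self_right]
  push_cast
  ring

lemma IsStrictCDF.continuousOn_PiSPA (hF : IsStrictCDF F) (hN : 1 ≤ N) (hr0 : 0 ≤ r)
    (hr1 : r ≤ 1) : ContinuousOn (PiSPA F N r) (Icc 0 r) := by
  have hFr : ContinuousOn F (Icc 0 r) := hF.continuousOn.mono (Icc_subset_Icc_right hr1)
  refine ContinuousOn.congr ?_ fun v hv => hF.PiSPA_eq hN hr1 hv
  refine (continuousOn_id.mul ?_).add (continuousOn_finsetSum _ fun m _ => ?_)
  · exact (continuousOn_const.sub ((continuousOn_const.sub hFr).pow N)).sub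
      (continuousOn_const.mul hFr)
  · exact (continuousOn_const.mul (hFr.pow _)).mul (hF.continuousOn_integral_one_sub_pow hr0 hr1)

lemma IsStrictCDF.PiSPA_self_neg (hF : IsStrictCDF F) (hN : 2 ≤ N) (hr0 : 0 < r) (hr1 : r ≤ 1) :
    PiSPA F N r r < 0 := by
  rw [hF.PiSPA_eq (by omega) hr1 (right_mem_Icc.2 hr0.le)]
  simp only [intervalIntegral.integral_same, mul_zero, Finset.sum_const_zero, add_zero]
  have := one_sub_mul_lt_one_sub_pow (hF.pos hr0 hr1) (hF.le_one ⟨hr0.le, hr1⟩) hN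
  exact mul_neg_of_pos_of_neg hr0 (by linarith)

lemma IsStrictCDF.exists_PiSPA_pos (hF : IsStrictCDF F) (hN : 2 ≤ N) (hr0 : 0 < r)
    (hr1 : r ≤ 1) : ∃ v ∈ Ioo 0 r, 0 < PiSPA F N r v := by
  set φ : ℝ → ℝ := fun v => ∫ x in v..r, (1 - F x) ^ (N - 2)
  obtain ⟨v, hv, hφv⟩ : ∃ v ∈ Ioo 0 r, 0 < φ v - v :=
    ((hF.continuousOn_integral_one_sub_pow hr0.le hr1).sub continuousOn_id).exists_mem_Ioo_pos
      hr0 (by simpa using hF.integral_one_sub_pow_pos le_rfl hr0 hr1)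
  refine ⟨v, hv, ?_⟩
  have hv' : v ∈ Icc 0 r := Ioo_subset_Icc_self hv
  have ha0 : 0 < F v := hF.pos hv.1 (hv.2.le.trans hr1)
  set C : ℝ := (N.choose 2 : ℝ)
  have hC : C = N.choose (N - 2) := by rw [Nat.choose_symm (by omega)]
  have hloss : v * (1 - (1 - F v) ^ N - N * F v) ≥ -(C * F v ^ 2 * v) := by
    nlinarith [mul_le_mul_of_nonneg_left
      (one_sub_pow_le ha0.le (hF.le_one ⟨hv'.1, hv.2.le.trans hr1⟩) N) hv'.1]
  have hgain : C * F v ^ 2 * φ v ≤ ∑ m ∈ Finset.range (N - 1),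
      (N.choose m : ℝ) * F v ^ (N - m) * ∫ x in v..r, (1 - F x) ^ m := by
    have h := Finset.single_le_sum (f := fun m => (N.choose m : ℝ) * F v ^ (N - m) *
      ∫ x in v..r, (1 - F x) ^ m) (fun m _ => mul_nonneg (by positivity)
        (hF.integral_one_sub_pow_nonneg hv'.1 hv'.2 hr1))
      (Finset.mem_range.2 (by omega : N - 2 < N - 1))
    rwa [show N - (N - 2) = 2 by omega, ← hC] at h
  rw [hF.PiSPA_eq (by omega) hr1 hv']
  have hCpos : 0 < C := Nat.cast_pos.2 (Nat.choose_pos hN)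
  have : 0 < C * F v ^ 2 * (φ v - v) := by positivity
  nlinarith

end SecondPrice

section FirstPrice

variable {F : ℝ → ℝ} {N m : ℕ} {r v b : ℝ}

lemma G_mem_Icc (hvb : F v ≤ F b) (hb : F b ≤ 1) : G F v b ∈ Icc 0 1 :=
  ⟨div_nonneg (sub_nonneg.2 hvb) (by linarith), div_le_one_of_le₀ (by linarith) (by linarith)⟩

lemma IsStrictCDF.mul_one_sub_G_pow_le (hF : IsStrictCDF F) (hr1 : r ≤ 1) (hv : 0 ≤ v)
    (hb : b ∈ Icc v r) : b * (1 - G F v b) ^ m ≤ r := by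
  have hb01 : b ∈ Icc (0 : ℝ) 1 := ⟨hv.trans hb.1, hb.2.trans hr1⟩
  have hG := G_mem_Icc (hF.strictMonoOn.monotoneOn ⟨hv, hb.1.trans hb01.2⟩ hb01 hb.1)
    (hF.le_one hb01)
  calc b * (1 - G F v b) ^ m ≤ b * 1 :=
        mul_le_mul_of_nonneg_left (pow_le_one₀ (by linarith [hG.2]) (by linarith [hG.1])) hb01.1
    _ ≤ r := by linarith [hb.2]

lemma IsStrictCDF.bddAbove_ubarb (hF : IsStrictCDF F) (hr1 : r ≤ 1) (hv : 0 ≤ v) :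
    BddAbove ((fun b => b * (1 - G F v b) ^ m) '' Icc v r) :=
  ⟨r, forall_mem_image.2 fun _ hb => hF.mul_one_sub_G_pow_le hr1 hv hb⟩

lemma IsStrictCDF.le_ubarb (hF : IsStrictCDF F) (hr1 : r ≤ 1) (hv : v ∈ Icc 0 r) :
    v ≤ ubarb F r m v :=
  le_csSup (hF.bddAbove_ubarb hr1 hv.1) ⟨v, left_mem_Icc.2 hv.2, by simp [G]⟩

lemma IsStrictCDF.ubarb_le (hF : IsStrictCDF F) (hr1 : r ≤ 1) (hv : v ∈ Icc 0 r) :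
    ubarb F r m v ≤ r :=
  csSup_le ((nonempty_Icc.2 hv.2).image _) (forall_mem_image.2 fun _ hb =>
    hF.mul_one_sub_G_pow_le hr1 hv.1 hb)

lemma ubarb_self : ubarb F r m r = r := by
  simp [ubarb, G]

lemma mul_ubarb_eq (hFv : F v < 1) :
    (1 - F v) ^ m * ubarb F r m v = sSup ((fun b => b * (1 - F b) ^ m) '' Icc v r) := by
  have hc : 1 - F v ≠ 0 := (sub_pos.2 hFv).ne'
  rw [ubarb, ← smul_eq_mul, ← Real.sSup_smul_of_nonneg (pow_nonneg (sub_pos.2 hFv).le _),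
    ← image_smul, image_image]
  refine congrArg sSup (image_congr fun b _ => ?_)
  simp only [G, smul_eq_mul]
  rw [one_sub_div hc, sub_sub_sub_cancel_right, div_pow]
  field_simp

lemma IsStrictCDF.continuousOn_ubarb (hF : IsStrictCDF F) (hr0 : 0 ≤ r) (hr1 : r ≤ 1) :
    ContinuousOn (ubarb F r m) (Icc 0 r) := by
  intro v hv
  rcases (hv.2.trans hr1).lt_or_eq with hv1 | rfl
  · set S := fun w => sSup ((fun b => b * (1 - F b) ^ m) '' Icc w r)
    have hpow := hF.continuousOn_one_sub_pow (m := m) (Icc_subset_Icc_right hr1)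
    have hquot : ∀ w ∈ Icc 0 r, w < 1 → ubarb F r m w = S w / (1 - F w) ^ m := by
      intro w hw hw1
      rw [eq_div_iff (pow_ne_zero _ (sub_pos.2 (hF.lt_one hw.1 hw1)).ne'), mul_comm]
      exact mul_ubarb_eq (hF.lt_one hw.1 hw1)
    have hS : ContinuousOn S (Icc 0 r) := (continuousOn_id.mul hpow).sSup_image_Icc hr0
    refine ((hS v hv).div (hpow v hv) (pow_ne_zero _ (sub_pos.2 (hF.lt_one hv.1 hv1)).ne'))
      |>.congr_of_eventuallyEq ?_ (hquot v hv hv1)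
    filter_upwards [self_mem_nhdsWithin, nhdsWithin_le_nhds (Iio_mem_nhds hv1)] with w hw hw1
    exact hquot w hw hw1
  · obtain rfl : r = 1 := le_antisymm hr1 hv.2
    -- at `v = r = 1` the formula breaks down (`G F 1 b = 0`), but `w ≤ ubarb w ≤ 1` squeezes it
    rw [ContinuousWithinAt, ubarb_self]
    refine tendsto_of_tendsto_of_tendsto_of_le_of_le' (tendsto_nhdsWithin_of_tendsto_nhds
      tendsto_id) tendsto_const_nhds ?_ ?_ <;>
      filter_upwards [self_mem_nhdsWithin] with w hw
    exacts [hF.le_ubarb le_rfl hw, hF.ubarb_le le_rfl hw]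

lemma IsStrictCDF.continuousOn_PiFPA (hF : IsStrictCDF F) (hr0 : 0 ≤ r) (hr1 : r ≤ 1) :
    ContinuousOn (PiFPA F N r) (Icc 0 r) := by
  have hFr : ContinuousOn F (Icc 0 r) := hF.continuousOn.mono (Icc_subset_Icc_right hr1)
  have hub : ∀ m, ContinuousOn (ubarb F r m) (Icc 0 r) := fun m => hF.continuousOn_ubarb hr0 hr1
  have hφ := hF.continuousOn_integral_one_sub_pow (m := N - 1) hr0 hr1
  unfold PiFPA pFPA
  fun_prop

end FirstPrice

section Comparison

variable {F : ℝ → ℝ} {N m : ℕ} {r v b : ℝ}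

lemma IsStrictCDF.mul_one_sub_pow_lt (hF : IsStrictCDF F) (hm : 1 ≤ m) (hv0 : 0 < v)
    (hvr : v < r) (hr1 : r ≤ 1) (hb : b ∈ Icc v r) :
    b * (1 - F b) ^ m < v * (1 - F v) ^ m + ∫ x in v..r, (1 - F x) ^ m := by
  have hv01 : v ∈ Icc (0 : ℝ) 1 := ⟨hv0.le, hvr.le.trans hr1⟩
  have hb01 : b ∈ Icc (0 : ℝ) 1 := ⟨hv0.le.trans hb.1, hb.2.trans hr1⟩
  rcases hb.1.eq_or_lt with rfl | hvb
  · linarith [hF.integral_one_sub_pow_pos hv0.le hvr hr1 (m := m)]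
  have hFb : 0 ≤ 1 - F b := sub_nonneg.2 (hF.le_one hb01)
  have hrect : (b - v) * (1 - F b) ^ m ≤ ∫ x in v..b, (1 - F x) ^ m := by
    rw [← smul_eq_mul, ← intervalIntegral.integral_const]
    refine intervalIntegral.integral_mono_on hb.1 intervalIntegrable_const
      (hF.intervalIntegrable_one_sub_pow hv01 hb01) fun x hx => pow_le_pow_left₀ hFb ?_ m
    linarith [hF.strictMonoOn.monotoneOn ⟨hv0.le.trans hx.1, hx.2.trans hb01.2⟩ hb01 hx.2]
  have htail : ∫ x in v..b, (1 - F x) ^ m ≤ ∫ x in v..r, (1 - F x) ^ m := by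
    rw [← intervalIntegral.integral_add_adjacent_intervals
      (hF.intervalIntegrable_one_sub_pow hv01 hb01)
      (hF.intervalIntegrable_one_sub_pow hb01 ⟨hv0.le.trans hvr.le, hr1⟩)]
    linarith [hF.integral_one_sub_pow_nonneg hb01.1 hb.2 hr1 (m := m)]
  have hdrop : (1 - F b) ^ m < (1 - F v) ^ m :=
    pow_lt_pow_left₀ (by linarith [hF.strictMonoOn hv01 hb01 hvb]) hFb (by omega)
  nlinarith

lemma IsStrictCDF.ubarb_lt_y (hF : IsStrictCDF F) (hm : 1 ≤ m) (hv0 : 0 < v) (hvr : v < r)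
    (hr1 : r ≤ 1) : ubarb F r m v < y F r m v := by
  have hFv : F v < 1 := hF.lt_one hv0.le (hvr.trans_le hr1)
  rw [← mul_lt_mul_iff_right₀ (pow_pos (sub_pos.2 hFv) m), mul_ubarb_eq hFv,
    hF.mul_y_eq hr1 ⟨hv0.le, hvr.le⟩]
  refine (isCompact_Icc.sSup_lt_iff_of_continuous (f := fun b => b * (1 - F b) ^ m)
    (nonempty_Icc.2 hvr.le)
    (continuousOn_id.mul (hF.continuousOn_one_sub_pow (Icc_subset_Icc hv0.le hr1))) _).2
      fun b hb => ?_
  linarith [hF.mul_one_sub_pow_lt hm hv0 hvr hr1 hb]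

lemma PiSPA_sub_PiFPA (hN : 1 ≤ N) (v : ℝ) :
    PiSPA F N r v - PiFPA F N r v =
      ∑ m ∈ Finset.Icc 1 (N - 1),
        (N.choose m : ℝ) * F v ^ (N - m) * (1 - F v) ^ m * (y F r m v - ubarb F r m v) +
      N * F v * ∑ m ∈ Finset.range (N - 1), ((N - 1).choose m : ℝ) * (1 - F v) ^ m *
        F v ^ (N - 1 - m) * (ubarb F r (m + 1) v - v) := by
  have hy0 : y F r 0 v = r := by simp [y]
  have hswap : ∀ m, (N.choose m : ℝ) * (1 - F v) ^ m * F v ^ (N - m) * ubarb F r m v =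
      (N.choose m : ℝ) * F v ^ (N - m) * (1 - F v) ^ m * ubarb F r m v := fun m => by ring
  rw [PiSPA, PiFPA, pFPA, pstar, Finset.sum_range_eq_add_sum_Icc hN, hy0,
    Finset.sum_congr rfl fun m _ => hswap m]
  simp only [Nat.choose_zero_right, Nat.sub_zero, pow_zero, mul_sub, Finset.sum_sub_distrib]
  ring

lemma IsStrictCDF.PiFPA_lt_PiSPA (hF : IsStrictCDF F) (hN : 2 ≤ N) (hv0 : 0 < v) (hvr : v < r)
    (hr1 : r ≤ 1) : PiFPA F N r v < PiSPA F N r v := by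
  have hv : v ∈ Icc 0 r := ⟨hv0.le, hvr.le⟩
  have ha0 : 0 < F v := hF.pos hv0 (hvr.le.trans hr1)
  have ha1 : 0 < 1 - F v := sub_pos.2 (hF.lt_one hv0.le (hvr.trans_le hr1))
  rw [← sub_pos, PiSPA_sub_PiFPA (by omega)]
  refine add_pos_of_pos_of_nonneg
    (Finset.sum_pos (fun m hm => ?_) (Finset.nonempty_Icc.2 (by omega)))
    (mul_nonneg (by positivity) (Finset.sum_nonneg fun m _ => ?_))
  · have hm := Finset.mem_Icc.1 hm
    have := sub_pos.2 (hF.ubarb_lt_y hm.1 hv0 hvr hr1)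
    have : 0 < (N.choose m : ℝ) := Nat.cast_pos.2 (Nat.choose_pos (by omega))
    positivity
  · have := sub_nonneg.2 (hF.le_ubarb hr1 hv (m := m + 1))
    positivity

lemma PiFPA_self_eq_PiSPA_self (hN : 1 ≤ N) : PiFPA F N r r = PiSPA F N r r := by
  rw [eq_comm, ← sub_eq_zero, PiSPA_sub_PiFPA hN]
  simp [y, ubarb_self]

lemma PiFPA_zero (hF0 : F 0 = 0) (hN : 1 ≤ N) : PiFPA F N r 0 = 0 := by
  rw [PiFPA, Finset.sum_eq_zero fun m hm => ?_]
  · simp [hF0, zero_pow (by omega : N ≠ 0)]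
  · simp [hF0, zero_pow (by have := Finset.mem_Icc.1 hm; omega : N - m ≠ 0)]

end Comparison

theorem speculation_more_profitable_in_SPA_general
    (F f : ℝ → ℝ) (N : ℕ) (hN : 2 ≤ N)
    (hderiv : ∀ x ∈ Icc (0 : ℝ) 1, HasDerivAt F (f x) x)
    (hfpos : ∀ x ∈ Ioo (0 : ℝ) 1, 0 < f x)
    (hF0 : F 0 = 0) (hF1 : F 1 = 1)
    (r : ℝ) (hr : r ∈ Ioc (0 : ℝ) 1) :
    ContinuousOn (PiSPA F N r) (Icc 0 r) ∧
    ContinuousOn (PiFPA F N r) (Icc 0 r) ∧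
    ∃ v₁ ∈ Icc (0 : ℝ) r, ∃ v₂ ∈ Icc (0 : ℝ) r,
      (∀ v ∈ Icc (0 : ℝ) r, PiSPA F N r v ≤ PiSPA F N r v₁) ∧
      (∀ v ∈ Icc (0 : ℝ) r, PiFPA F N r v ≤ PiFPA F N r v₂) ∧
      PiFPA F N r v₂ < PiSPA F N r v₁ := by
  obtain ⟨hr0, hr1⟩ := hr
  have hF := IsStrictCDF.of_hasDerivAt hderiv hfpos hF0 hF1
  have hSPA := hF.continuousOn_PiSPA (N := N) (by omega) hr0.le hr1
  have hFPA := hF.continuousOn_PiFPA (N := N) hr0.le hr1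
  obtain ⟨v₁, hv₁, hmax₁⟩ := isCompact_Icc.exists_isMaxOn (nonempty_Icc.2 hr0.le) hSPA
  obtain ⟨v₂, hv₂, hmax₂⟩ := isCompact_Icc.exists_isMaxOn (nonempty_Icc.2 hr0.le) hFPA
  refine ⟨hSPA, hFPA, v₁, hv₁, v₂, hv₂, hmax₁, hmax₂, ?_⟩
  obtain ⟨v₀, hv₀, hpos⟩ := hF.exists_PiSPA_pos hN hr0 hr1
  have hmax_pos : 0 < PiSPA F N r v₁ := hpos.trans_le (hmax₁ (Ioo_subset_Icc_self hv₀))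
  rcases eq_endpoints_or_mem_Ioo_of_mem_Icc hv₂ with rfl | rfl | hv₂'
  · rwa [PiFPA_zero hF0 (by omega)]
  · rw [PiFPA_self_eq_PiSPA_self (by omega)]
    linarith [hF.PiSPA_self_neg hN hr0 hr1]
  · exact (hF.PiFPA_lt_PiSPA hN hv₂'.1 hv₂'.2 hr1).trans_le (hmax₁ hv₂)

/-- Speculation is strictly more profitable in second-price auctions than in
first-price auctions. -/
theorem speculation_more_profitable_in_SPA
    (F f : ℝ → ℝ) (N : ℕ) (hN : 2 ≤ N)
    (hderiv : ∀ x ∈ Icc (0 : ℝ) 1, HasDerivAt F (f x) x)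
    (hfc : ContinuousOn f (Icc 0 1))
    (hfpos : ∀ x ∈ Ioo (0 : ℝ) 1, 0 < f x)
    (hF0 : F 0 = 0) (hF1 : F 1 = 1)
    (r : ℝ) (hr : r ∈ Ioc (0 : ℝ) 1) :
    ContinuousOn (PiSPA F N r) (Icc 0 r) ∧
    ContinuousOn (PiFPA F N r) (Icc 0 r) ∧
    ∃ v₁ ∈ Icc (0 : ℝ) r, ∃ v₂ ∈ Icc (0 : ℝ) r,
      (∀ v ∈ Icc (0 : ℝ) r, PiSPA F N r v ≤ PiSPA F N r v₁) ∧
      (∀ v ∈ Icc (0 : ℝ) r, PiFPA F N r v ≤ PiFPA F N r v₂) ∧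
      PiFPA F N r v₂ < PiSPA F N r v₁ :=
  speculation_more_profitable_in_SPA_general F f N hN hderiv hfpos hF0 hF1 r hr
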